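/- Let A and B be Hermitian matrices and τ > 0. Then ‖e^{τA} e^{−τB}‖ ≤ exp(∫₀^τ ‖e^{xA}(A−B)e^{−xA}‖ dx), where ‖·‖ is the operator norm. In particular, if ‖e^{xA}(A−B)e^{−xA}‖ ≤ K for all x ∈ [0,τ], then ‖e^{τA} e^{−τB}‖ ≤ e^{τK}. -/

import Mathlib

/-!
`F t = e^{tA} e^{-tB}` solves the linear equation `F' = G t * F` with
`G t = e^{tA} (A - B) e^{-tA}` and `F 0 = 1`, so Grönwall's inequality bounds `‖F τ‖` by
`‖1‖ e^{τK}`; for the operator norm on matrices `‖1‖ ≤ 1`.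
-/

open scoped Matrix.Norms.L2Operator

open NormedSpace Set

theorem norm_le_mul_exp_of_hasDerivAt_eq_mul {E : Type*} [NormedRing E] [NormedSpace ℝ E]
    {F G : ℝ → E} {a b K : ℝ} (hab : a ≤ b) (hF : ∀ x ∈ Icc a b, HasDerivAt F (G x * F x) x)
    (hG : ∀ x ∈ Ico a b, ‖G x‖ ≤ K) :
    ‖F b‖ ≤ ‖F a‖ * Real.exp (K * (b - a)) := by
  have bound : ∀ x ∈ Ico a b, ‖G x * F x‖ ≤ K * ‖F x‖ + 0 := fun x hx => by
    rw [add_zero]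
    exact (norm_mul_le _ _).trans (mul_le_mul_of_nonneg_right (hG x hx) (norm_nonneg _))
  have := norm_le_gronwallBound_of_norm_deriv_right_le
    (fun x hx => (hF x hx).continuousAt.continuousWithinAt)
    (fun x hx => (hF x (Ico_subset_Icc_self hx)).hasDerivWithinAt) le_rfl bound b ⟨hab, le_rfl⟩
  rwa [gronwallBound_ε0] at this

section ExpProduct

variable {𝔸 : Type*} [NormedRing 𝔸] [NormedAlgebra ℝ 𝔸] [CompleteSpace 𝔸]

theorem exp_neg_mul_exp (A : 𝔸) : exp (-A) * exp A = 1 := by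
  let +nondep : NormedAlgebra ℚ 𝔸 := .restrictScalars ℚ ℝ 𝔸
  rw [← exp_add_of_commute (Commute.refl A).neg_left, neg_add_cancel, exp_zero]

theorem hasDerivAt_exp_smul_mul_exp_neg_smul (A B : 𝔸) (x : ℝ) :
    HasDerivAt (fun t : ℝ => exp (t • A) * exp (-(t • B)))
      (exp (x • A) * (A - B) * exp (-(x • A)) * (exp (x • A) * exp (-(x • B)))) x := by
  have hA := hasDerivAt_exp_smul_const (𝕂 := ℝ) A x
  have hB := hasDerivAt_exp_smul_const' (𝕂 := ℝ) (-B) x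
  simp only [smul_neg] at hB
  refine (hA.mul hB).congr_deriv ?_
  rw [mul_assoc _ (exp (-(x • A))), ← mul_assoc (exp (-(x • A))), exp_neg_mul_exp, one_mul]
  noncomm_ring

theorem norm_exp_smul_mul_exp_neg_smul_le (A B : 𝔸) {τ K : ℝ} (hτ : 0 ≤ τ)
    (hK : ∀ x ∈ Ico 0 τ, ‖exp (x • A) * (A - B) * exp (-(x • A))‖ ≤ K) :
    ‖exp (τ • A) * exp (-(τ • B))‖ ≤ ‖(1 : 𝔸)‖ * Real.exp (τ * K) := by
  have := norm_le_mul_exp_of_hasDerivAt_eq_mul hτ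
    (fun x _ => hasDerivAt_exp_smul_mul_exp_neg_smul A B x) hK
  simpa only [zero_smul, neg_zero, exp_zero, mul_one, sub_zero, mul_comm K] using this

end ExpProduct

theorem Matrix.l2_opNorm_one_le {n : Type*} [Fintype n] [DecidableEq n] :
    ‖(1 : Matrix n n ℂ)‖ ≤ 1 := by
  rw [Matrix.cstar_norm_def, map_one]
  exact ContinuousLinearMap.norm_id_le

theorem exp_product_norm_bound_general {n : Type*} [Fintype n] [DecidableEq n]
    (A B : Matrix n n ℂ)
    (τ K : ℝ) (hτ : 0 < τ)
    (hK : ∀ x ∈ Set.Icc (0 : ℝ) τ,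
      ‖NormedSpace.exp (x • A) * (A - B) * NormedSpace.exp (-(x • A))‖ ≤ K) :
    ‖NormedSpace.exp (τ • A) * NormedSpace.exp (-(τ • B))‖ ≤
      Real.exp (τ * K) :=
  calc _ ≤ ‖(1 : Matrix n n ℂ)‖ * Real.exp (τ * K) :=
        norm_exp_smul_mul_exp_neg_smul_le A B hτ.le fun x hx => hK x (Ico_subset_Icc_self hx)
    _ ≤ Real.exp (τ * K) :=
        mul_le_of_le_one_left (Real.exp_pos _).le Matrix.l2_opNorm_one_le

/-- If `‖e^{xA}(A−B)e^{−xA}‖ ≤ K` for all `x ∈ [0,τ]`, then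
`‖e^{τA} e^{−τB}‖ ≤ e^{τK}`. -/
theorem exp_product_norm_bound {n : Type*} [Fintype n] [DecidableEq n]
    (A B : Matrix n n ℂ) (hA : A.IsHermitian) (hB : B.IsHermitian)
    (τ K : ℝ) (hτ : 0 < τ)
    (hK : ∀ x ∈ Set.Icc (0 : ℝ) τ,
      ‖NormedSpace.exp (x • A) * (A - B) * NormedSpace.exp (-(x • A))‖ ≤ K) :
    ‖NormedSpace.exp (τ • A) * NormedSpace.exp (-(τ • B))‖ ≤
      Real.exp (τ * K) :=
  exp_product_norm_bound_general A B τ K hτ hK
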